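/- Let Δ be an ∨-decomposable NNF and γ be a set of states containing at most one state per variable. Then the formula ∀γ·Δ (the result of universally quantifying every state in γ from Δ) is equivalent to the NNF obtained from Δ as follows: for each state x_i ∈ γ, replace every occurrence of the literal ¬x_i by ⊥, every occurrence of x_j for j ≠ i by ⊥, and every occurrence of ¬x_j for j ≠ i by x_i. Moreover this replacement preserves ∨-decomposability. -/

import Mathlib

/-- A discrete formula over variables `V`, where variable `v` has states `σ v`. -/
inductive DForm (V : Type) (σ : V → Type) : Type where
  | top : DForm V σ
  | bot : DForm V σ
  | state : (v : V) → σ v → DForm V σ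
  | neg : DForm V σ → DForm V σ
  | conj : DForm V σ → DForm V σ → DForm V σ
  | disj : DForm V σ → DForm V σ → DForm V σ

namespace DForm

variable {V : Type} {σ : V → Type}

/-- Evaluation of a discrete formula in a world `w`. -/
def eval [∀ v, DecidableEq (σ v)] (w : ∀ v, σ v) : DForm V σ → Bool
  | top => true
  | bot => false
  | state v s => decide (w v = s)
  | neg φ => !(φ.eval w)
  | conj φ ψ => φ.eval w && ψ.eval w
  | disj φ ψ => φ.eval w || ψ.eval w

/-- Two formulas are equivalent when they have the same models. -/
def equiv [∀ v, DecidableEq (σ v)] (φ ψ : DForm V σ) : Prop :=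
  ∀ w : ∀ v, σ v, φ.eval w = ψ.eval w

/-- `φ ⊨ ψ`: every model of `φ` is a model of `ψ`. -/
def entails [∀ v, DecidableEq (σ v)] (φ ψ : DForm V σ) : Prop :=
  ∀ w : ∀ v, σ v, φ.eval w = true → ψ.eval w = true

/-- Conditioning `Δ|x_i`: replace occurrences of `x_i` by `⊤` and of `x_j` (`j ≠ i`) by `⊥`. -/
def cond [DecidableEq V] [∀ v, DecidableEq (σ v)] (v : V) (s : σ v) :
    DForm V σ → DForm V σ
  | top => top
  | bot => bot
  | state u t =>
      if h : u = v then (if h ▸ t = s then top else bot) else state u t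
  | neg φ => neg (φ.cond v s)
  | conj φ ψ => conj (φ.cond v s) (ψ.cond v s)
  | disj φ ψ => disj (φ.cond v s) (ψ.cond v s)

/-- Universal quantification of state `x_i`:
`∀x_i·Δ := (Δ|x_i) ∧ ⋀_{j≠i} (x_i ∨ Δ|x_j)`. -/
noncomputable def quant [DecidableEq V] [∀ v, DecidableEq (σ v)] [∀ v, Fintype (σ v)]
    (v : V) (s : σ v) (Δ : DForm V σ) : DForm V σ :=
  ((Finset.univ.filter (fun j => j ≠ s)).toList).foldr
    (fun j acc => conj (disj (state v s) (Δ.cond v j)) acc) (Δ.cond v s)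

/-- The set of variables occurring in a formula. -/
def vars : DForm V σ → Set V
  | top => ∅
  | bot => ∅
  | state u _ => {u}
  | neg φ => φ.vars
  | conj φ ψ => φ.vars ∪ ψ.vars
  | disj φ ψ => φ.vars ∪ ψ.vars

/-- Whether state `x_i` (the positive literal) occurs in the formula. -/
def stateOccurs (v : V) (s : σ v) : DForm V σ → Prop
  | top => False
  | bot => False
  | state u t => ∃ h : u = v, h ▸ t = s
  | neg φ => φ.stateOccurs v s
  | conj φ ψ => φ.stateOccurs v s ∨ ψ.stateOccurs v s
  | disj φ ψ => φ.stateOccurs v s ∨ ψ.stateOccurs v s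

/-- An NNF only negates states (literals). -/
def isNNF : DForm V σ → Prop
  | top => True
  | bot => True
  | state _ _ => True
  | neg (state _ _) => True
  | neg _ => False
  | conj φ ψ => φ.isNNF ∧ ψ.isNNF
  | disj φ ψ => φ.isNNF ∧ ψ.isNNF

/-- A positive NNF contains no negation at all. -/
def isPositive : DForm V σ → Prop
  | top => True
  | bot => True
  | state _ _ => True
  | neg _ => False
  | conj φ ψ => φ.isPositive ∧ ψ.isPositive
  | disj φ ψ => φ.isPositive ∧ ψ.isPositive

/-- A monotone NNF is positive and has at most one state per variable. -/
def monotone (Δ : DForm V σ) : Prop :=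
  Δ.isPositive ∧ ∀ (v : V) (s t : σ v), Δ.stateOccurs v s → Δ.stateOccurs v t → s = t

/-- ∨-decomposability: disjuncts of every disjunction share no variables. -/
def orDecomposable : DForm V σ → Prop
  | top => True
  | bot => True
  | state _ _ => True
  | neg φ => φ.orDecomposable
  | conj φ ψ => φ.orDecomposable ∧ ψ.orDecomposable
  | disj φ ψ => φ.vars ∩ ψ.vars = ∅ ∧ φ.orDecomposable ∧ ψ.orDecomposable

/-- ∧-decomposability: conjuncts of every conjunction share no variables. -/
def andDecomposable : DForm V σ → Prop
  | top => True
  | bot => True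
  | state _ _ => True
  | neg φ => φ.andDecomposable
  | conj φ ψ => φ.vars ∩ ψ.vars = ∅ ∧ φ.andDecomposable ∧ ψ.andDecomposable
  | disj φ ψ => φ.andDecomposable ∧ ψ.andDecomposable

end DForm

variable {V : Type} {σ : V → Type}

/-- For the state `s` of variable `v`: replace `¬x_i` by `⊥`, `x_j` (`j ≠ i`)
by `⊥` and `¬x_j` (`j ≠ i`) by `x_i` (where `x_i` denotes that state). -/
def replaceQ [DecidableEq V] [∀ v, DecidableEq (σ v)] (v : V) (s : σ v) :
    DForm V σ → DForm V σ
  | .top => .top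
  | .bot => .bot
  | .state u t =>
      if h : u = v then (if h ▸ t = s then .state u t else .bot) else .state u t
  | .neg (.state u t) =>
      if h : u = v then (if h ▸ t = s then .bot else .state v s) else .neg (.state u t)
  | .neg φ => .neg (replaceQ v s φ)
  | .conj φ ψ => .conj (replaceQ v s φ) (replaceQ v s ψ)
  | .disj φ ψ => .disj (replaceQ v s φ) (replaceQ v s ψ)

/-- Universally quantify a list of states, one after the other. -/
noncomputable def quantList [DecidableEq V] [∀ v, DecidableEq (σ v)] [∀ v, Fintype (σ v)] :
    List ((v : V) × σ v) → DForm V σ → DForm V σ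
  | [], Δ => Δ
  | p :: ps, Δ => quantList ps (DForm.quant p.1 p.2 Δ)

/-- Apply the replacement `replaceQ` for each state in the list. -/
def replaceList [DecidableEq V] [∀ v, DecidableEq (σ v)] :
    List ((v : V) × σ v) → DForm V σ → DForm V σ
  | [], Δ => Δ
  | p :: ps, Δ => replaceList ps (replaceQ p.1 p.2 Δ)

/-! At a world where `x_i` holds, `∀x_i·Δ` agrees with `Δ`, and so does the replacement, which
only rewrites literals into formulas of the same truth value there. At any other world, `∀x_i·Δ`
holds iff `Δ` holds for every value of `X`; there the replacement turns every literal of `X`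
into `⊥`, which is what `∀` does to a literal, and `∀` commutes with `∧` always and with `∨`
as soon as one disjunct does not mention `X`, which is what ∨-decomposability provides.
The replacement only removes variables, so it preserves NNF and ∨-decomposability, and the
case of several states follows by induction. -/

namespace DForm

section Semantics

variable [∀ v, DecidableEq (σ v)]

theorem eval_cond [DecidableEq V] (v : V) (t : σ v) (Δ : DForm V σ) (w : ∀ u, σ u) :
    (Δ.cond v t).eval w = Δ.eval (Function.update w v t) := by
  induction Δ with
  | top | bot => rfl
  | state u t' =>
    obtain rfl | h := eq_or_ne u v
    · by_cases ht : t' = t <;> simp [cond, eval, ht, eq_comm]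
    · simp [cond, eval, h]
  | neg φ ih => simp [cond, eval, ih]
  | conj φ ψ ih₁ ih₂ | disj φ ψ ih₁ ih₂ => simp [cond, eval, ih₁, ih₂]

theorem eval_update_of_notMem_vars [DecidableEq V] {v : V} {Δ : DForm V σ} (h : v ∉ Δ.vars)
    (w : ∀ u, σ u) (t : σ v) : Δ.eval (Function.update w v t) = Δ.eval w := by
  induction Δ with
  | top | bot => rfl
  | state u t' =>
    have hu : u ≠ v := by rintro rfl; simp [vars] at h
    simp [eval, hu]
  | neg φ ih => simp_all [vars, eval]
  | conj φ ψ ih₁ ih₂ | disj φ ψ ih₁ ih₂ => simp_all [vars, eval]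

end Semantics

section Quantification

variable [DecidableEq V] [∀ v, DecidableEq (σ v)] [∀ v, Fintype (σ v)]

theorem eval_quant (v : V) (s : σ v) (Δ : DForm V σ) (w : ∀ u, σ u) :
    (Δ.quant v s).eval w = true ↔ Δ.eval (Function.update w v s) = true ∧
      ∀ j ≠ s, w v = s ∨ Δ.eval (Function.update w v j) = true := by
  have hfold : ∀ L : List (σ v),
      (L.foldr (fun j acc => conj (disj (state v s) (Δ.cond v j)) acc) (Δ.cond v s)).eval w
        = true ↔ (Δ.cond v s).eval w = true ∧ ∀ j ∈ L, w v = s ∨ (Δ.cond v j).eval w = true := by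
    intro L
    induction L with
    | nil => simp
    | cons j L ih =>
      simp only [List.foldr_cons, eval, Bool.and_eq_true, Bool.or_eq_true, decide_eq_true_eq, ih,
        List.mem_cons, forall_eq_or_imp]
      tauto
  simp [quant, hfold, eval_cond]

theorem eval_quant_of_eq {v : V} {s : σ v} (Δ : DForm V σ) {w : ∀ u, σ u} (hw : w v = s) :
    (Δ.quant v s).eval w = Δ.eval w := by
  rw [Bool.eq_iff_iff, eval_quant, ← hw, Function.update_eq_self]
  simp

theorem eval_quant_of_ne {v : V} {s : σ v} (Δ : DForm V σ) {w : ∀ u, σ u} (hw : w v ≠ s) :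
    (Δ.quant v s).eval w = true ↔ ∀ j, Δ.eval (Function.update w v j) = true := by
  rw [eval_quant]
  refine ⟨fun ⟨hs, hj⟩ j => ?_, fun h => ⟨h s, fun j _ => .inr (h j)⟩⟩
  by_cases h : j = s
  · exact h ▸ hs
  · exact (hj j h).resolve_left hw

theorem quant_congr (v : V) (s : σ v) {Δ Δ' : DForm V σ} (h : Δ.equiv Δ') :
    (Δ.quant v s).equiv (Δ'.quant v s) := by
  intro w
  rw [Bool.eq_iff_iff, eval_quant, eval_quant]
  simp only [h _]

end Quantification

@[elab_as_elim]
theorem isNNF_induction {motive : (Δ : DForm V σ) → Δ.isNNF → Prop}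
    (top : motive top trivial) (bot : motive bot trivial)
    (state : ∀ u t, motive (state u t) trivial)
    (negState : ∀ u t, motive (neg (.state u t)) trivial)
    (conj : ∀ φ ψ hφ hψ, motive φ hφ → motive ψ hψ → motive (conj φ ψ) ⟨hφ, hψ⟩)
    (disj : ∀ φ ψ hφ hψ, motive φ hφ → motive ψ hψ → motive (disj φ ψ) ⟨hφ, hψ⟩) :
    ∀ (Δ : DForm V σ) (h : Δ.isNNF), motive Δ h
  | .top, _ => top
  | .bot, _ => bot
  | .state u t, _ => state u t
  | .neg (.state u t), _ => negState u t
  | .conj φ ψ, ⟨hφ, hψ⟩ =>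
    conj φ ψ hφ hψ (isNNF_induction top bot state negState conj disj φ hφ)
      (isNNF_induction top bot state negState conj disj ψ hψ)
  | .disj φ ψ, ⟨hφ, hψ⟩ =>
    disj φ ψ hφ hψ (isNNF_induction top bot state negState conj disj φ hφ)
      (isNNF_induction top bot state negState conj disj ψ hψ)

end DForm

open DForm

section Replacement

variable [DecidableEq V] [∀ v, DecidableEq (σ v)]

@[simp]
theorem replaceQ_state_self (v : V) (s t : σ v) :
    replaceQ v s (.state v t) = if t = s then .state v t else .bot := by
  simp [replaceQ]

@[simp]
theorem replaceQ_state_of_ne {u v : V} (h : u ≠ v) (s : σ v) (t : σ u) :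
    replaceQ v s (.state u t) = .state u t := by
  simp [replaceQ, h]

@[simp]
theorem replaceQ_neg_state_self (v : V) (s t : σ v) :
    replaceQ v s (.neg (.state v t)) = if t = s then .bot else .state v s := by
  simp [replaceQ]

@[simp]
theorem replaceQ_neg_state_of_ne {u v : V} (h : u ≠ v) (s : σ v) (t : σ u) :
    replaceQ v s (.neg (.state u t)) = .neg (.state u t) := by
  simp [replaceQ, h]

@[simp]
theorem replaceQ_conj (v : V) (s : σ v) (φ ψ : DForm V σ) :
    replaceQ v s (.conj φ ψ) = .conj (replaceQ v s φ) (replaceQ v s ψ) := rfl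

@[simp]
theorem replaceQ_disj (v : V) (s : σ v) (φ ψ : DForm V σ) :
    replaceQ v s (.disj φ ψ) = .disj (replaceQ v s φ) (replaceQ v s ψ) := rfl

theorem isNNF_replaceQ (v : V) (s : σ v) {Δ : DForm V σ} (h : Δ.isNNF) :
    (replaceQ v s Δ).isNNF := by
  induction Δ, h using isNNF_induction with
  | top | bot => trivial
  | state u t | negState u t =>
    obtain rfl | h := eq_or_ne u v
    · by_cases ht : t = s <;> simp [ht, isNNF]
    · simp [h, isNNF]
  | conj φ ψ _ _ ih₁ ih₂ | disj φ ψ _ _ ih₁ ih₂ => exact ⟨ih₁, ih₂⟩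

theorem vars_replaceQ_subset (v : V) (s : σ v) {Δ : DForm V σ} (h : Δ.isNNF) :
    (replaceQ v s Δ).vars ⊆ Δ.vars := by
  induction Δ, h using isNNF_induction with
  | top | bot => rfl
  | state u t | negState u t =>
    obtain rfl | h := eq_or_ne u v
    · by_cases ht : t = s <;> simp [ht, vars]
    · simp [h]
  | conj φ ψ _ _ ih₁ ih₂ | disj φ ψ _ _ ih₁ ih₂ => exact Set.union_subset_union ih₁ ih₂

theorem orDecomposable_replaceQ (v : V) (s : σ v) {Δ : DForm V σ} (hnnf : Δ.isNNF)
    (hdec : Δ.orDecomposable) : (replaceQ v s Δ).orDecomposable := by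
  induction Δ, hnnf using isNNF_induction with
  | top | bot => trivial
  | state u t | negState u t =>
    obtain rfl | h := eq_or_ne u v
    · by_cases ht : t = s <;> simp [ht, orDecomposable]
    · simp [h, orDecomposable]
  | conj φ ψ _ _ ih₁ ih₂ => exact ⟨ih₁ hdec.1, ih₂ hdec.2⟩
  | disj φ ψ hφ hψ ih₁ ih₂ =>
    refine ⟨Set.subset_empty_iff.mp ?_, ih₁ hdec.2.1, ih₂ hdec.2.2⟩
    exact hdec.1 ▸ Set.inter_subset_inter (vars_replaceQ_subset v s hφ)
      (vars_replaceQ_subset v s hψ)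

theorem eval_replaceQ_of_eq {v : V} {s : σ v} {Δ : DForm V σ} (h : Δ.isNNF) {w : ∀ u, σ u}
    (hw : w v = s) : (replaceQ v s Δ).eval w = Δ.eval w := by
  induction Δ, h using isNNF_induction with
  | top | bot => rfl
  | state u t | negState u t =>
    obtain rfl | h := eq_or_ne u v
    · by_cases ht : t = s <;> simp [ht, eval, hw, eq_comm]
    · simp [h]
  | conj φ ψ _ _ ih₁ ih₂ | disj φ ψ _ _ ih₁ ih₂ => simp [eval, ih₁, ih₂]

theorem eval_replaceQ_of_ne {v : V} {s : σ v} {Δ : DForm V σ} (hnnf : Δ.isNNF)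
    (hdec : Δ.orDecomposable) {w : ∀ u, σ u} (hw : w v ≠ s) :
    (replaceQ v s Δ).eval w = true ↔ ∀ j, Δ.eval (Function.update w v j) = true := by
  have : Nonempty (σ v) := ⟨w v⟩
  induction Δ, hnnf using isNNF_induction with
  | top | bot => simp [replaceQ, eval]
  | state u t =>
    obtain rfl | h := eq_or_ne u v
    · by_cases ht : t = s
      · simpa [ht, eval, hw] using ⟨w u, hw⟩
      · simpa [ht, eval] using ⟨s, Ne.symm ht⟩
    · simp [h, eval]
  | negState u t =>
    obtain rfl | h := eq_or_ne u v
    · by_cases ht : t = s <;> simp [ht, eval, hw]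
    · simp [h, eval]
  | conj φ ψ _ _ ih₁ ih₂ =>
    simp only [replaceQ_conj, eval, Bool.and_eq_true, ih₁ hdec.1, ih₂ hdec.2, forall_and]
  | disj φ ψ _ _ ih₁ ih₂ =>
    simp only [replaceQ_disj, eval, Bool.or_eq_true, ih₁ hdec.2.1, ih₂ hdec.2.2]
    have hv : v ∉ φ.vars ∨ v ∉ ψ.vars :=
      not_and_or.mp (Set.eq_empty_iff_forall_notMem.mp hdec.1 v)
    rcases hv with hv | hv
    · simp only [eval_update_of_notMem_vars hv, forall_const, forall_or_left]
    · simp only [eval_update_of_notMem_vars hv, forall_const, forall_or_right]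

theorem orDecomposable_replaceList (γ : List ((v : V) × σ v)) {Δ : DForm V σ}
    (hnnf : Δ.isNNF) (hdec : Δ.orDecomposable) : (replaceList γ Δ).orDecomposable := by
  induction γ generalizing Δ with
  | nil => exact hdec
  | cons p γ ih =>
    exact ih (isNNF_replaceQ p.1 p.2 hnnf) (orDecomposable_replaceQ p.1 p.2 hnnf hdec)

end Replacement

section Equivalence

variable [DecidableEq V] [∀ v, DecidableEq (σ v)] [∀ v, Fintype (σ v)]

theorem quant_equiv_replaceQ (v : V) (s : σ v) {Δ : DForm V σ} (hnnf : Δ.isNNF)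
    (hdec : Δ.orDecomposable) : (Δ.quant v s).equiv (replaceQ v s Δ) := by
  intro w
  by_cases hw : w v = s
  · rw [eval_quant_of_eq Δ hw, eval_replaceQ_of_eq hnnf hw]
  · rw [Bool.eq_iff_iff, eval_quant_of_ne Δ hw, eval_replaceQ_of_ne hnnf hdec hw]

theorem quantList_congr (γ : List ((v : V) × σ v)) {Δ Δ' : DForm V σ} (h : Δ.equiv Δ') :
    (quantList γ Δ).equiv (quantList γ Δ') := by
  induction γ generalizing Δ Δ' with
  | nil => exact h
  | cons p γ ih => exact ih (quant_congr p.1 p.2 h)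

theorem quantList_equiv_replaceList (γ : List ((v : V) × σ v)) {Δ : DForm V σ}
    (hnnf : Δ.isNNF) (hdec : Δ.orDecomposable) : (quantList γ Δ).equiv (replaceList γ Δ) := by
  induction γ generalizing Δ with
  | nil => exact fun _ => rfl
  | cons p γ ih =>
    intro w
    exact (quantList_congr γ (quant_equiv_replaceQ p.1 p.2 hnnf hdec) w).trans
      (ih (isNNF_replaceQ p.1 p.2 hnnf) (orDecomposable_replaceQ p.1 p.2 hnnf hdec) w)

end Equivalence

open DForm in
theorem quant_orDecomposable_general [DecidableEq V] [∀ v, DecidableEq (σ v)] [∀ v, Fintype (σ v)]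
    (Δ : DForm V σ) (hnnf : Δ.isNNF) (hdec : Δ.orDecomposable)
    (γ : List ((v : V) × σ v)) :
    equiv (quantList γ Δ) (replaceList γ Δ) ∧ (replaceList γ Δ).orDecomposable :=
  ⟨quantList_equiv_replaceList γ hnnf hdec, orDecomposable_replaceList γ hnnf hdec⟩

open DForm in
/-- Universally quantifying a set of states (at most one per variable) from an
∨-decomposable NNF amounts to the literal replacement `replaceQ`, and the
result is again ∨-decomposable. -/
theorem quant_orDecomposable [DecidableEq V] [∀ v, DecidableEq (σ v)] [∀ v, Fintype (σ v)]
    (Δ : DForm V σ) (hnnf : Δ.isNNF) (hdec : Δ.orDecomposable)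
    (γ : List ((v : V) × σ v)) (hγ : γ.Pairwise (fun p q => p.1 ≠ q.1)) :
    equiv (quantList γ Δ) (replaceList γ Δ) ∧ (replaceList γ Δ).orDecomposable :=
  quant_orDecomposable_general Δ hnnf hdec γ
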